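/- arXiv:2204.05773 — 2 statements merged into one kernel-verified Lean document; each statement's English description precedes it below -/
import Mathlib

section
/- Let u^c : {1,…,N} × {1,…,T} → [0,1] be continuous controls and let u^b ∈ {0,1}^{N×T} be any binary controls satisfying the SOS1 property ∑_{j=1}^N u^b_{jk} = 1 for every k. Define ε(Δt) = max_{k=1,…,T} |∑_{τ=1}^k (∑_{j=1}^N u^c_{jτ} − 1) Δt|, where Δt > 0. If N ≥ 2, then max_{k=1,…,T} ‖∑_{τ=1}^k (u^c_τ − u^b_τ) Δt‖_∞ ≥ ε(Δt)/N, where u^c_τ, u^b_τ ∈ ℝ^N are the control vectors at time step τ and ‖·‖_∞ is the max-norm on ℝ^N. -/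
open Finset

/-- If the binary controls `ub` satisfy the SOS1 property, then the maximum (over time steps)
of the max-norm of the cumulative deviation between the continuous controls `uc` and `ub`
is at least `ε(Δt)/N`, where `ε(Δt)` is the maximum cumulative SOS1 violation of `uc`. -/
theorem sur_lower_bound_no_sos1 (N T : ℕ) (hN : 2 ≤ N) (hT : 0 < T)
    (Δt : ℝ) (hΔt : 0 < Δt)
    (uc ub : ℕ → ℕ → ℝ)
    (huc : ∀ j k, 0 ≤ uc j k ∧ uc j k ≤ 1)
    (hub : ∀ j k, ub j k = 0 ∨ ub j k = 1)
    (hsos1 : ∀ k < T, ∑ j ∈ Finset.range N, ub j k = 1) :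
    ((Finset.range T).sup' (Finset.nonempty_range_iff.mpr hT.ne')
        (fun k => |∑ τ ∈ Finset.range (k + 1),
            ((∑ j ∈ Finset.range N, uc j τ) - 1) * Δt|)) / N ≤
      (Finset.range T).sup' (Finset.nonempty_range_iff.mpr hT.ne')
        (fun k => (Finset.range N).sup'
            (Finset.nonempty_range_iff.mpr (by omega))
            (fun j => |∑ τ ∈ Finset.range (k + 1), (uc j τ - ub j τ) * Δt|)) := by
  have hN0 : (0:ℝ) < N := by positivity
  rw [div_le_iff₀ hN0]
  apply Finset.sup'_le
  intro k hk
  have hkT : k < T := Finset.mem_range.mp hk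
  set M := (Finset.range T).sup' (Finset.nonempty_range_iff.mpr hT.ne')
        (fun k => (Finset.range N).sup'
            (Finset.nonempty_range_iff.mpr (by omega : N ≠ 0))
            (fun j => |∑ τ ∈ Finset.range (k + 1), (uc j τ - ub j τ) * Δt|)) with hM
  have key : (∑ τ ∈ Finset.range (k + 1), ((∑ j ∈ Finset.range N, uc j τ) - 1) * Δt)
      = ∑ j ∈ Finset.range N, ∑ τ ∈ Finset.range (k + 1), (uc j τ - ub j τ) * Δt := by
    rw [Finset.sum_comm]
    apply Finset.sum_congr rfl
    intro τ hτ
    have hτT : τ < T := lt_of_le_of_lt (Nat.lt_succ_iff.mp (Finset.mem_range.mp hτ)) hkT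
    rw [← Finset.sum_mul]
    congr 1
    rw [Finset.sum_sub_distrib, hsos1 τ hτT]
  calc |∑ τ ∈ Finset.range (k + 1), ((∑ j ∈ Finset.range N, uc j τ) - 1) * Δt|
      = |∑ j ∈ Finset.range N, ∑ τ ∈ Finset.range (k + 1), (uc j τ - ub j τ) * Δt| := by
        rw [key]
    _ ≤ ∑ j ∈ Finset.range N, |∑ τ ∈ Finset.range (k + 1), (uc j τ - ub j τ) * Δt| :=
        Finset.abs_sum_le_sum_abs _ _
    _ ≤ ∑ _j ∈ Finset.range N, M := by
        apply Finset.sum_le_sum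
        intro j hj
        calc |∑ τ ∈ Finset.range (k + 1), (uc j τ - ub j τ) * Δt|
            ≤ (Finset.range N).sup' (Finset.nonempty_range_iff.mpr (by omega : N ≠ 0))
              (fun j => |∑ τ ∈ Finset.range (k + 1), (uc j τ - ub j τ) * Δt|) :=
            Finset.le_sup' (fun j => |∑ τ ∈ Finset.range (k + 1), (uc j τ - ub j τ) * Δt|) hj
          _ ≤ M := Finset.le_sup' (fun k => (Finset.range N).sup'
              (Finset.nonempty_range_iff.mpr (by omega : N ≠ 0))
              (fun j => |∑ τ ∈ Finset.range (k + 1), (uc j τ - ub j τ) * Δt|)) hk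
    _ = M * N := by
        rw [Finset.sum_const, Finset.card_range, nsmul_eq_mul, mul_comm]
end

section
/- Let u^c ∈ [0,1]^{N×T} with N ≥ 2 and let u^b be the output of sum-up rounding. For a bounded Hamiltonian family H_k(u) = H⁽⁰⁾ + ∑_j u_{jk} H⁽ʲ⁾, suppose the cumulative control deviations satisfy ‖∑_{τ=1}^k (u^c_τ − u^b_τ)Δt‖_∞ → 0 uniformly in k as Δt → 0 with TΔt = t_f fixed. Then the final evolved operators converge: lim_{Δt→0} X^b_T = lim_{Δt→0} X^c_T, where X_T = ∏_{k=T}^{1} exp(−i H_k Δt) X_0 (product in decreasing order of k), provided both limits exist. Consequently, for any continuous objective F, lim_{Δt→0} F(X^b_T) = lim_{Δt→0} F(X^c_T). -/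
/-
Write `Pa k`, `Pb k` for the evolutions generated by `a`, `b` after `k` steps, `h` for a bound on
the generators and `Q k = ∑_{τ < k} (b τ - a τ)` for their cumulative difference. Expanding the
exponentials to second order, `(1 + Q k) * Pa k` follows `Pb k` with an error `O(h² + h ‖Q‖)` per
step, so a discrete Gronwall argument gives `Pb T - (1 + Q T) * Pa T = O(T h (h + ‖Q‖))`, while
`Q T * Pa T = O(‖Q‖)`. With `h = O(Δt)` and `T Δt = t_f`, the two evolutions differ by
`O(Δt + max ‖Q‖)`, which tends to zero under the hypothesis on the cumulative control deviations.
-/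

open Finset Matrix

/-- The controller selected by sum-up rounding at time step `k` (0-indexed). -/
noncomputable def surSel (N : ℕ) (Δt : ℝ) (uc : ℕ → ℕ → ℝ) : ℕ → ℕ := fun k =>
  Nat.strongRecOn k (fun n ih =>
    let ub : ℕ → ℕ → ℝ := fun j τ => if h : τ < n then (if ih τ h = j then 1 else 0) else 0
    let phat : ℕ → ℝ := fun j =>
      (∑ τ ∈ Finset.range (n + 1), uc j τ * Δt) - ∑ τ ∈ Finset.range n, ub j τ * Δt
    ((Finset.range N).filter (fun j => ∀ j' ∈ Finset.range N, phat j' ≤ phat j)).min.getD 0)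

/-- The binary controls produced by sum-up rounding. -/
noncomputable def surRound (N : ℕ) (Δt : ℝ) (uc : ℕ → ℕ → ℝ) : ℕ → ℕ → ℝ :=
  fun j k => if surSel N Δt uc k = j then 1 else 0

open Filter Topology

namespace NormedSpace

variable {𝔸 : Type*} [NormedRing 𝔸] [NormOneClass 𝔸] [NormedAlgebra ℂ 𝔸] [CompleteSpace 𝔸]

theorem norm_exp_sub_sum_range_le (x : 𝔸) (m : ℕ) :
    ‖exp x - ∑ i ∈ range m, (i.factorial : ℂ)⁻¹ • x ^ i‖ ≤ ‖x‖ ^ m * Real.exp ‖x‖ := by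
  have hreal : HasSum (fun i => ‖x‖ ^ i / i.factorial) (Real.exp ‖x‖) := by
    rw [Real.exp_eq_exp_ℝ]; exact expSeries_div_hasSum_exp ‖x‖
  refine ((hasSum_nat_add_iff' m).mpr (exp_series_hasSum_exp' (𝕂 := ℂ) x)).norm_le_of_bounded
    (hreal.mul_left _) fun i => ?_
  calc ‖((i + m).factorial : ℂ)⁻¹ • x ^ (i + m)‖
      ≤ ((i + m).factorial : ℝ)⁻¹ * ‖x‖ ^ (i + m) := by
        rw [norm_smul, norm_inv, Complex.norm_natCast]; gcongr; exact norm_pow_le _ _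
    _ ≤ (i.factorial : ℝ)⁻¹ * ‖x‖ ^ (i + m) := by
        gcongr; exact Nat.le_add_right i m
    _ = ‖x‖ ^ m * (‖x‖ ^ i / i.factorial) := by ring

theorem norm_exp_le_exp_norm (x : 𝔸) : ‖exp x‖ ≤ Real.exp ‖x‖ := by
  simpa using norm_exp_sub_sum_range_le x 0

theorem norm_exp_sub_one_le (x : 𝔸) : ‖exp x - 1‖ ≤ ‖x‖ * Real.exp ‖x‖ := by
  simpa using norm_exp_sub_sum_range_le x 1

theorem norm_exp_sub_one_sub_le (x : 𝔸) : ‖exp x - 1 - x‖ ≤ ‖x‖ ^ 2 * Real.exp ‖x‖ := by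
  simpa [sum_range_succ, sub_sub] using norm_exp_sub_sum_range_le x 2

end NormedSpace

def evolve {M : Type*} [Monoid M] (f : ℕ → M) (X₀ : M) : ℕ → M
  | 0 => X₀
  | k + 1 => f k * evolve f X₀ k

theorem evolve_eq_list_prod {M : Type*} [Monoid M] (f : ℕ → M) (X₀ : M) (T : ℕ) :
    evolve f X₀ T = ((List.range T).reverse.map f).prod * X₀ := by
  induction T with
  | zero => simp [evolve]
  | succ T ih => simp [evolve, ih, List.range_succ, mul_assoc]

section Evolution

variable {𝔸 : Type*} [NormedRing 𝔸]

theorem norm_evolve_le {f : ℕ → 𝔸} {ρ : ℝ} (hf : ∀ k, ‖f k‖ ≤ ρ) (X₀ : 𝔸) (T : ℕ) :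
    ‖evolve f X₀ T‖ ≤ ρ ^ T * ‖X₀‖ := by
  induction T with
  | zero => simp [evolve]
  | succ T ih =>
    calc ‖f T * evolve f X₀ T‖ ≤ ρ * (ρ ^ T * ‖X₀‖) := norm_mul_le_of_le (hf T) ih
      _ = ρ ^ (T + 1) * ‖X₀‖ := by ring

theorem norm_le_of_eq_mul_add {z e r : ℕ → 𝔸} {ρ η : ℝ} {T : ℕ} (hz₀ : z 0 = 0)
    (hz : ∀ k < T, z (k + 1) = e k * z k + r k) (he : ∀ k < T, ‖e k‖ ≤ ρ)
    (hr : ∀ k < T, ‖r k‖ ≤ ρ ^ (k + 1) * η) : ‖z T‖ ≤ T * ρ ^ T * η := by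
  suffices ∀ k ≤ T, ‖z k‖ ≤ k * ρ ^ k * η from this T le_rfl
  intro k hk
  induction k with
  | zero => simp [hz₀]
  | succ k ih =>
    have hkT : k < T := hk
    rw [hz k hkT]
    calc ‖e k * z k + r k‖ ≤ ρ * (k * ρ ^ k * η) + ρ ^ (k + 1) * η :=
        norm_add_le_of_le (norm_mul_le_of_le (he k hkT) (ih hkT.le)) (hr k hkT)
      _ = (k + 1 : ℕ) * ρ ^ (k + 1) * η := by push_cast; ring

end Evolution

section Comparison

open NormedSpace

variable {𝔸 : Type*} [NormedRing 𝔸] [NormOneClass 𝔸] [NormedAlgebra ℂ 𝔸] [CompleteSpace 𝔸]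

theorem norm_exp_mul_one_add_sub_le {a b Q : 𝔸} {h q : ℝ} (ha : ‖a‖ ≤ h) (hb : ‖b‖ ≤ h)
    (hQ : ‖Q‖ ≤ q) :
    ‖exp b * (1 + Q) - (1 + (Q + (b - a))) * exp a‖ ≤ (4 * h ^ 2 + 2 * h * q) * Real.exp h := by
  have hh : 0 ≤ h := (norm_nonneg _).trans ha
  have hq : 0 ≤ q := (norm_nonneg _).trans hQ
  have hsa : ‖exp a - 1 - a‖ ≤ h ^ 2 * Real.exp h :=
    (norm_exp_sub_one_sub_le a).trans (by gcongr)
  have hsb : ‖exp b - 1 - b‖ ≤ h ^ 2 * Real.exp h :=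
    (norm_exp_sub_one_sub_le b).trans (by gcongr)
  have hla : ‖exp a - 1‖ ≤ h * Real.exp h :=
    (norm_exp_sub_one_le a).trans (by gcongr)
  have hlb : ‖exp b - 1‖ ≤ h * Real.exp h :=
    (norm_exp_sub_one_le b).trans (by gcongr)
  have hd : ‖b - a‖ ≤ 2 * h := (norm_sub_le _ _).trans (by linarith)
  have key : exp b * (1 + Q) - (1 + (Q + (b - a))) * exp a
      = (exp b - 1 - b) - (exp a - 1 - a) - (b - a) * (exp a - 1)
        + ((exp b - 1) * Q - Q * (exp a - 1)) := by noncomm_ring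
  rw [key]
  calc _ ≤ ‖exp b - 1 - b‖ + ‖exp a - 1 - a‖ + ‖b - a‖ * ‖exp a - 1‖
          + (‖exp b - 1‖ * ‖Q‖ + ‖Q‖ * ‖exp a - 1‖) := by
        refine norm_add_le_of_le (norm_sub_le_of_le (norm_sub_le _ _) (norm_mul_le _ _))
          (norm_sub_le_of_le (norm_mul_le _ _) (norm_mul_le _ _))
    _ ≤ h ^ 2 * Real.exp h + h ^ 2 * Real.exp h + 2 * h * (h * Real.exp h)
          + (h * Real.exp h * q + q * (h * Real.exp h)) := by gcongr
    _ = (4 * h ^ 2 + 2 * h * q) * Real.exp h := by ring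

theorem norm_evolve_exp_sub_le {a b : ℕ → 𝔸} {h q : ℝ} {T : ℕ} (X₀ : 𝔸)
    (ha : ∀ k, ‖a k‖ ≤ h) (hb : ∀ k, ‖b k‖ ≤ h)
    (hQ : ∀ k ≤ T, ‖∑ τ ∈ range k, (b τ - a τ)‖ ≤ q) :
    ‖evolve (fun k => exp (b k)) X₀ T - evolve (fun k => exp (a k)) X₀ T‖
      ≤ Real.exp h ^ T * ‖X₀‖ * (T * (4 * h ^ 2 + 2 * h * q) + q) := by
  set Q : ℕ → 𝔸 := fun k => ∑ τ ∈ range k, (b τ - a τ)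
  set Pa := evolve (fun k => exp (a k)) X₀
  set Pb := evolve (fun k => exp (b k)) X₀
  have hexp : ∀ k, ‖exp (a k)‖ ≤ Real.exp h :=
    fun k => (norm_exp_le_exp_norm _).trans (Real.exp_le_exp.2 (ha k))
  have hPa : ∀ k, ‖Pa k‖ ≤ Real.exp h ^ k * ‖X₀‖ := norm_evolve_le hexp X₀
  have hz : ‖Pb T - (1 + Q T) * Pa T‖ ≤ T * Real.exp h ^ T * ((4 * h ^ 2 + 2 * h * q) * ‖X₀‖) := by
    refine norm_le_of_eq_mul_add (z := fun k => Pb k - (1 + Q k) * Pa k) (e := fun k => exp (b k))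
      (r := fun k => (exp (b k) * (1 + Q k) - (1 + (Q k + (b k - a k))) * exp (a k)) * Pa k)
      (by simp [Pa, Pb, Q, evolve]) (fun k _ => ?_)
      (fun k _ => (norm_exp_le_exp_norm _).trans (Real.exp_le_exp.2 (hb k))) (fun k hk => ?_)
    · dsimp only [Pa, Pb, Q, evolve]
      rw [sum_range_succ]
      noncomm_ring
    · calc _ ≤ (4 * h ^ 2 + 2 * h * q) * Real.exp h * (Real.exp h ^ k * ‖X₀‖) :=
            norm_mul_le_of_le (norm_exp_mul_one_add_sub_le (ha k) (hb k) (hQ k hk.le)) (hPa k)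
        _ = _ := by ring
  have hQPa : ‖Q T * Pa T‖ ≤ q * (Real.exp h ^ T * ‖X₀‖) :=
    norm_mul_le_of_le (hQ T le_rfl) (hPa T)
  calc ‖Pb T - Pa T‖ = ‖(Pb T - (1 + Q T) * Pa T) + Q T * Pa T‖ := by congr 1; noncomm_ring
    _ ≤ _ := norm_add_le_of_le hz hQPa
    _ = _ := by ring

end Comparison

section Control

open NormedSpace

variable {𝔸 : Type*} [NormedRing 𝔸] [NormedAlgebra ℂ 𝔸]

def hamiltonian (H0 : 𝔸) (Hc : ℕ → 𝔸) (N : ℕ) (u : ℕ → ℕ → ℝ) (k : ℕ) : 𝔸 :=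
  H0 + ∑ j ∈ range N, (u j k : ℂ) • Hc j

variable {H0 : 𝔸} {Hc : ℕ → 𝔸} {N : ℕ}

theorem norm_hamiltonian_le {u : ℕ → ℕ → ℝ} {C : ℝ} (hu : ∀ j k, |u j k| ≤ 1)
    (hC : ‖H0‖ + ∑ j ∈ range N, ‖Hc j‖ ≤ C) (k : ℕ) : ‖hamiltonian H0 Hc N u k‖ ≤ C := by
  refine (norm_add_le_of_le le_rfl ((norm_sum_le _ _).trans (sum_le_sum fun j _ => ?_))).trans hC
  rw [norm_smul, Complex.norm_real, Real.norm_eq_abs]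
  exact mul_le_of_le_one_left (norm_nonneg _) (hu j k)

theorem sum_smul_hamiltonian_sub (a b : ℕ → ℕ → ℝ) (Δ : ℝ) (k : ℕ) :
    ∑ τ ∈ range k, ((-(Complex.I * Δ)) • hamiltonian H0 Hc N b τ
        - (-(Complex.I * Δ)) • hamiltonian H0 Hc N a τ)
      = ∑ j ∈ range N, (Complex.I * ((∑ τ ∈ range k, (a j τ - b j τ) * Δ : ℝ) : ℂ)) • Hc j := by
  simp only [← smul_sub, hamiltonian, add_sub_add_left_eq_sub, ← sum_sub_distrib, ← sub_smul,
    smul_sum, smul_smul]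
  rw [sum_comm]
  refine sum_congr rfl fun j _ => ?_
  rw [← sum_smul]
  congr 1
  push_cast
  rw [mul_sum]
  exact sum_congr rfl fun τ _ => by ring

theorem norm_sum_smul_hamiltonian_sub_le {a b : ℕ → ℕ → ℝ} {Δ δ : ℝ} {k : ℕ}
    (hab : ∀ j < N, |∑ τ ∈ range k, (a j τ - b j τ) * Δ| ≤ δ) :
    ‖∑ τ ∈ range k, ((-(Complex.I * Δ)) • hamiltonian H0 Hc N b τ
        - (-(Complex.I * Δ)) • hamiltonian H0 Hc N a τ)‖ ≤ δ * ∑ j ∈ range N, ‖Hc j‖ := by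
  rw [sum_smul_hamiltonian_sub, mul_sum]
  refine (norm_sum_le _ _).trans (sum_le_sum fun j hj => ?_)
  rw [norm_smul, norm_mul, Complex.norm_I, one_mul, Complex.norm_real, Real.norm_eq_abs]
  exact mul_le_mul_of_nonneg_right (hab j (mem_range.1 hj)) (norm_nonneg _)

variable [NormOneClass 𝔸] [CompleteSpace 𝔸]

theorem norm_evolve_hamiltonian_sub_le {a b : ℕ → ℕ → ℝ} {C Δ δ : ℝ} {T : ℕ}
    (ha : ∀ j k, |a j k| ≤ 1) (hb : ∀ j k, |b j k| ≤ 1)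
    (hC : ‖H0‖ + ∑ j ∈ range N, ‖Hc j‖ ≤ C) (hδ : 0 ≤ δ)
    (hdev : ∀ k < T, ∀ j < N, |∑ τ ∈ range (k + 1), (a j τ - b j τ) * Δ| ≤ δ) (X₀ : 𝔸) :
    ‖evolve (fun k => exp ((-(Complex.I * Δ)) • hamiltonian H0 Hc N b k)) X₀ T
        - evolve (fun k => exp ((-(Complex.I * Δ)) • hamiltonian H0 Hc N a k)) X₀ T‖
      ≤ Real.exp (|Δ| * C) ^ T * ‖X₀‖
          * (T * (4 * (|Δ| * C) ^ 2 + 2 * (|Δ| * C) * (δ * C)) + δ * C) := by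
  have hgen : ∀ u : ℕ → ℕ → ℝ, (∀ j k, |u j k| ≤ 1) →
      ∀ k, ‖(-(Complex.I * Δ)) • hamiltonian H0 Hc N u k‖ ≤ |Δ| * C := fun u hu k => by
    rw [norm_smul, norm_neg, norm_mul, Complex.norm_I, one_mul, Complex.norm_real,
      Real.norm_eq_abs]
    exact mul_le_mul_of_nonneg_left (norm_hamiltonian_le hu hC k) (abs_nonneg _)
  have hHc : ∑ j ∈ range N, ‖Hc j‖ ≤ C := (le_add_of_nonneg_left (norm_nonneg _)).trans hC
  refine norm_evolve_exp_sub_le X₀ (hgen a ha) (hgen b hb) fun k hk => ?_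
  refine (norm_sum_smul_hamiltonian_sub_le fun j hj => ?_).trans (by gcongr)
  rcases k with _ | k
  · simpa using hδ
  · exact hdev k hk j hj

end Control

theorem tendsto_nhds_zero_of_forall_eventually_norm_le {α E : Type*} [SeminormedAddCommGroup E]
    {l : Filter α} {f : α → E} {g : α → ℝ} {c : ℝ} (hg : Tendsto g l (𝓝 0))
    (hf : ∀ δ > 0, ∀ᶠ x in l, ‖f x‖ ≤ g x + c * δ) : Tendsto f l (𝓝 0) := by
  rw [Metric.tendsto_nhds]
  intro ε hε
  have hδ : 0 < ε / (2 * (|c| + 1)) := by positivity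
  have hcδ : c * (ε / (2 * (|c| + 1))) < ε / 2 := by
    calc c * (ε / (2 * (|c| + 1))) ≤ |c| * (ε / (2 * (|c| + 1))) := by gcongr; exact le_abs_self c
      _ < (|c| + 1) * (ε / (2 * (|c| + 1))) := by gcongr; linarith
      _ = ε / 2 := by field_simp
  filter_upwards [hf _ hδ, hg.eventually (gt_mem_nhds (half_pos hε))] with x hfx hgx
  rw [dist_zero_right]
  linarith

theorem tendsto_evolve_hamiltonian_sub_nhds_zero {𝔸 : Type*} [NormedRing 𝔸] [NormOneClass 𝔸]
    [NormedAlgebra ℂ 𝔸] [CompleteSpace 𝔸] (H0 : 𝔸) (Hc : ℕ → 𝔸) (N : ℕ) (tf : ℝ) (X₀ : 𝔸)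
    {a b : ℕ → ℕ → ℕ → ℝ} (ha : ∀ T j k, |a T j k| ≤ 1) (hb : ∀ T j k, |b T j k| ≤ 1)
    (hdev : ∀ δ > 0, ∃ T₀ : ℕ, ∀ T ≥ T₀, ∀ k < T, ∀ j < N,
      |∑ τ ∈ range (k + 1), (a T j τ - b T j τ) * (tf / T)| ≤ δ) :
    Tendsto (fun T : ℕ =>
      evolve (fun k => NormedSpace.exp ((-(Complex.I * ((tf / T : ℝ) : ℂ))) •
          hamiltonian H0 Hc N (b T) k)) X₀ T
        - evolve (fun k => NormedSpace.exp ((-(Complex.I * ((tf / T : ℝ) : ℂ))) •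
          hamiltonian H0 Hc N (a T) k)) X₀ T) atTop (𝓝 0) := by
  set C := ‖H0‖ + ∑ j ∈ range N, ‖Hc j‖
  set K := Real.exp (|tf| * C) * ‖X₀‖
  have hC : 0 ≤ C := by positivity
  refine tendsto_nhds_zero_of_forall_eventually_norm_le
    (g := fun T : ℕ => K * (4 * |tf| * C ^ 2) * |tf / T|) (c := K * (2 * |tf| * C ^ 2 + C))
    (by simpa using (tendsto_const_div_atTop_nhds_zero_nat tf).abs.const_mul _)
    fun δ hδ => ?_
  obtain ⟨T₀, hT₀⟩ := hdev δ hδ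
  filter_upwards [eventually_ge_atTop T₀] with T hT
  refine (norm_evolve_hamiltonian_sub_le (ha T) (hb T) le_rfl hδ.le (hT₀ T hT) X₀).trans ?_
  have hstep : T * (|tf / T| * C) ≤ |tf| * C := by
    rcases T.eq_zero_or_pos with rfl | hT
    · simp only [Nat.cast_zero, zero_mul]; positivity
    · rw [abs_div, Nat.abs_cast, ← mul_assoc, mul_div_cancel₀ _ (by positivity)]
  rw [← Real.exp_nat_mul, show (T : ℝ) * (4 * (|tf / T| * C) ^ 2 + 2 * (|tf / T| * C) * (δ * C))
    = T * (|tf / T| * C) * (4 * (|tf / T| * C) + 2 * (δ * C)) by ring]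
  calc _ ≤ Real.exp (|tf| * C) * ‖X₀‖
          * (|tf| * C * (4 * (|tf / T| * C) + 2 * (δ * C)) + δ * C) := by gcongr
    _ = _ := by ring

theorem sur_evolution_convergence_general (n N : ℕ)
    (tf : ℝ)
    (H0 : Matrix (Fin n) (Fin n) ℂ) (Hc : ℕ → Matrix (Fin n) (Fin n) ℂ)
    (X0 : Matrix (Fin n) (Fin n) ℂ)
    (uc : ℕ → ℕ → ℕ → ℝ)
    (huc : ∀ T j k, 0 ≤ uc T j k ∧ uc T j k ≤ 1)
    (ub : ℕ → ℕ → ℕ → ℝ)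
    (hub : ∀ T, ub T = surRound N (tf / T) (uc T))
    (hdev : ∀ δ > 0, ∃ T₀ : ℕ, ∀ T ≥ T₀, ∀ k < T, ∀ j < N,
      |∑ τ ∈ Finset.range (k + 1), (uc T j τ - ub T j τ) * (tf / T)| ≤ δ)
    (Xfin : (ℕ → ℕ → ℝ) → ℕ → Matrix (Fin n) (Fin n) ℂ)
    (hXfin : ∀ u T, Xfin u T =
      ((List.range T).reverse.map (fun k =>
        NormedSpace.exp ((-(Complex.I * ((tf / T : ℝ) : ℂ))) •
          (H0 + ∑ j ∈ Finset.range N, (u j k : ℂ) • Hc j)))).prod * X0)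
    (Lb Lc : Matrix (Fin n) (Fin n) ℂ)
    (hLb : Filter.Tendsto (fun T => Xfin (ub T) T) Filter.atTop (nhds Lb))
    (hLc : Filter.Tendsto (fun T => Xfin (uc T) T) Filter.atTop (nhds Lc)) :
    Lb = Lc ∧ ∀ F : Matrix (Fin n) (Fin n) ℂ → ℝ, Continuous F → F Lb = F Lc := by
  suffices hL : Lb = Lc from ⟨hL, fun F _ => by rw [hL]⟩
  -- Any norm with `‖1‖ = 1` will do; the `ℓ∞` operator norm has this for nonempty index types.
  cases isEmpty_or_nonempty (Fin n)
  · exact Subsingleton.elim _ _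
  let := Matrix.linftyOpNormedRing (n := Fin n) (α := ℂ)
  let := Matrix.linftyOpNormedAlgebra (n := Fin n) (R := ℂ) (α := ℂ)
  have huc_abs : ∀ T j k, |uc T j k| ≤ 1 := fun T j k =>
    abs_le.2 ⟨by linarith [(huc T j k).1], (huc T j k).2⟩
  have hub_abs : ∀ T j k, |ub T j k| ≤ 1 := fun T j k => by
    rw [hub, surRound]; split_ifs <;> simp
  have hdiff := tendsto_evolve_hamiltonian_sub_nhds_zero H0 Hc N tf X0 huc_abs hub_abs hdev
  have hlim := hLb.sub hLc
  simp only [evolve_eq_list_prod, hamiltonian] at hdiff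
  simp only [hXfin] at hlim
  exact sub_eq_zero.1 (tendsto_nhds_unique hlim hdiff)

/-- Convergence of the rounded evolution: with `T` time steps of size `Δt = t_f/T`,
Hermitian Hamiltonians, and continuous controls `uc` (depending on the grid `T`) whose
cumulative deviation from the sum-up-rounded controls tends to `0` uniformly in the time
step, the final evolved operators under the rounded and the continuous controls have the
same limit as `Δt → 0` (i.e. `T → ∞`), provided both limits exist; consequently the limits
of any continuous objective agree. -/
theorem sur_evolution_convergence (n N : ℕ) (hn : 0 < n) (hN : 2 ≤ N)
    (tf : ℝ) (htf : 0 < tf)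
    (H0 : Matrix (Fin n) (Fin n) ℂ) (Hc : ℕ → Matrix (Fin n) (Fin n) ℂ)
    (hH0 : H0.IsHermitian) (hHc : ∀ j, (Hc j).IsHermitian)
    (X0 : Matrix (Fin n) (Fin n) ℂ) (hX0 : X0ᴴ * X0 = 1)
    (uc : ℕ → ℕ → ℕ → ℝ)
    (huc : ∀ T j k, 0 ≤ uc T j k ∧ uc T j k ≤ 1)
    (ub : ℕ → ℕ → ℕ → ℝ)
    (hub : ∀ T, ub T = surRound N (tf / T) (uc T))
    (hdev : ∀ δ > 0, ∃ T₀ : ℕ, ∀ T ≥ T₀, ∀ k < T, ∀ j < N,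
      |∑ τ ∈ Finset.range (k + 1), (uc T j τ - ub T j τ) * (tf / T)| ≤ δ)
    (Xfin : (ℕ → ℕ → ℝ) → ℕ → Matrix (Fin n) (Fin n) ℂ)
    (hXfin : ∀ u T, Xfin u T =
      ((List.range T).reverse.map (fun k =>
        NormedSpace.exp ((-(Complex.I * ((tf / T : ℝ) : ℂ))) •
          (H0 + ∑ j ∈ Finset.range N, (u j k : ℂ) • Hc j)))).prod * X0)
    (Lb Lc : Matrix (Fin n) (Fin n) ℂ)
    (hLb : Filter.Tendsto (fun T => Xfin (ub T) T) Filter.atTop (nhds Lb))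
    (hLc : Filter.Tendsto (fun T => Xfin (uc T) T) Filter.atTop (nhds Lc)) :
    Lb = Lc ∧ ∀ F : Matrix (Fin n) (Fin n) ℂ → ℝ, Continuous F → F Lb = F Lc :=
  sur_evolution_convergence_general n N tf H0 Hc X0 uc huc ub hub hdev Xfin hXfin Lb Lc hLb hLc
end
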